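/- arXiv:1702.05605 — 9 statements merged into one kernel-verified Lean document; each statement's English description precedes it below -/
import Mathlib

section
/- If R is a trinil clean ring, then the element 6 = 1+1+1+1+1+1 of R is nilpotent. -/
/-- A ring is *trinil clean* if every element is the sum of a tripotent
(`e ^ 3 = e`) and a nilpotent. -/
def TrinilClean (R : Type*) [Ring R] : Prop :=
  ∀ a : R, ∃ e w : R, e ^ 3 = e ∧ IsNilpotent w ∧ a = e + w

/-! Write `2 = e + w` with `e` tripotent and `w` nilpotent. Since `2` is central, `e = 2 - w`
commutes with `w`, so `2 ^ 3 - 2 = (2 ^ 3 - 2) - (e ^ 3 - e)` factors as `w` times an element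
commuting with `w`, and is therefore nilpotent. -/

section

variable {R : Type*} [Ring R]

theorem Commute.pow_three_sub_self_sub {x e : R} (hc : Commute x e) :
    x ^ 3 - x - (e ^ 3 - e) = (x - e) * (x ^ 2 + x * e + e ^ 2 - 1) := by
  simp only [pow_succ, pow_zero, one_mul, mul_add, sub_mul, mul_sub, mul_one, mul_assoc,
    hc.eq, hc.left_comm]
  abel

theorem isNilpotent_pow_three_sub_self_of_commute {x e : R} (he : e ^ 3 = e) (hc : Commute x e)
    (hxe : IsNilpotent (x - e)) : IsNilpotent (x ^ 3 - x) := by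
  have hx : Commute (x - e) x := (Commute.refl x).sub_left hc.symm
  have he' : Commute (x - e) e := hc.sub_left (Commute.refl e)
  have hfactor : Commute (x - e) (x ^ 2 + x * e + e ^ 2 - 1) :=
    (((hx.pow_right 2).add_right (hx.mul_right he')).add_right (he'.pow_right 2)).sub_right
      (Commute.one_right _)
  have hx3 : x ^ 3 - x = (x - e) * (x ^ 2 + x * e + e ^ 2 - 1) := by
    rw [← hc.pow_three_sub_self_sub, he, sub_self, sub_zero]
  rw [hx3]
  exact hfactor.isNilpotent_mul_right hxe

theorem TrinilClean.isNilpotent_pow_three_sub_self {a : R} (h : TrinilClean R)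
    (ha : ∀ b, Commute a b) : IsNilpotent (a ^ 3 - a) := by
  obtain ⟨e, w, he, hw, rfl⟩ := h a
  refine isNilpotent_pow_three_sub_self_of_commute he ?_ (by simpa using hw)
  simpa using ha e

end

theorem six_isNilpotent_of_trinilClean (R : Type*) [Ring R]
    (h : TrinilClean R) : IsNilpotent (6 : R) := by
  have h6 : (6 : R) = 2 ^ 3 - 2 := by norm_num
  exact h6 ▸ h.isNilpotent_pow_three_sub_self (Commute.ofNat_left 2)
end

section
/- A ring R is trinil clean if and only if there exist rings A and B and a ring isomorphism R ≅ A × B such that A and B are both trinil clean, 2 lies in the Jacobson radical of A, and 3 lies in the Jacobson radical of B. -/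
/-!
Writing `2 = e + w` with `e` tripotent and `w` nilpotent, the equation `(2 - w) ^ 3 = 2 - w`
becomes `6 = w * (11 - 6 * w + w ^ 2)`, so `6 ^ n = 0` for some `n`. A Bézout relation
`u * 2 ^ n + v * 3 ^ n = 1` then makes `v * 3 ^ n` a central idempotent, which splits `R` into a
factor where `2 ^ n = 0` and one where `3 ^ n = 0`; both inherit trinil cleanness as images of
`R`, and a central nilpotent element lies in the Jacobson radical. Conversely, trinil clean rings
are closed under binary products and surjective images.
-/

universe u

section

variable {R S : Type*} [Ring R] [Ring S]

theorem TrinilClean.of_surjective (f : R →+* S) (hf : Function.Surjective f)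
    (h : TrinilClean R) : TrinilClean S := by
  intro s
  obtain ⟨r, rfl⟩ := hf s
  obtain ⟨e, w, he, hw, rfl⟩ := h r
  exact ⟨f e, f w, by rw [← map_pow, he], hw.map f, map_add f e w⟩

theorem TrinilClean.prod (hR : TrinilClean R) (hS : TrinilClean S) : TrinilClean (R × S) := by
  rintro ⟨a, b⟩
  obtain ⟨e₁, w₁, he₁, ⟨k₁, hk₁⟩, rfl⟩ := hR a
  obtain ⟨e₂, w₂, he₂, ⟨k₂, hk₂⟩, rfl⟩ := hS b
  refine ⟨(e₁, e₂), (w₁, w₂), Prod.ext he₁ he₂, ⟨max k₁ k₂, Prod.ext ?_ ?_⟩, rfl⟩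
  · exact pow_eq_zero_of_le (le_max_left _ _) hk₁
  · exact pow_eq_zero_of_le (le_max_right _ _) hk₂

theorem TrinilClean.isNilpotent_six (h : TrinilClean R) : IsNilpotent (6 : R) := by
  obtain ⟨e, w, he, hw, h2⟩ := h 2
  obtain rfl : e = 2 - w := eq_sub_of_add_eq h2.symm
  have h6 : (6 : R) = w * (11 - 6 * w + w ^ 2) := by
    rw [← sub_eq_zero, ← sub_eq_zero.mpr he]; noncomm_ring; norm_num; abel
  rw [h6]
  exact Commute.isNilpotent_mul_right (by unfold Commute SemiconjBy; noncomm_ring) hw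

theorem Ideal.mem_jacobson_bot_of_isNilpotent_of_mem_center {x : R} (hx : IsNilpotent x)
    (hc : x ∈ Set.center R) : x ∈ Ideal.jacobson (⊥ : Ideal R) := by
  refine Ideal.mem_jacobson_iff.mpr fun y => ?_
  obtain ⟨u, hu⟩ :=
    (Commute.isNilpotent_mul_left ((Set.mem_center_iff.mp hc).comm y).symm hx).isUnit_add_one
  exact ⟨↑u⁻¹, by rw [Ideal.mem_bot, mul_assoc, ← mul_add_one, ← hu, u.inv_mul, sub_self]⟩

end

theorem IsIdempotentElem.exists_ringEquiv_prod_of_isMulCentral {R : Type u} [Ring R] {e : R}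
    (idem : IsIdempotentElem e) (hc : IsMulCentral e) :
    ∃ (A B : Type u) (_ : Ring A) (_ : Ring B) (φ : R ≃+* A × B),
      (∀ r, (φ r).1 = 0 ↔ e * r = 0) ∧ (∀ r, (φ r).2 = 0 ↔ (1 - e) * r = 0) := by
  have hcomplete : CompleteOrthogonalIdempotents ![e, 1 - e] :=
    CompleteOrthogonalIdempotents.pair_iff'ₛ.mpr
      ⟨idem.mul_one_sub_self, idem.one_sub_mul_self, add_sub_cancel e 1⟩
  have hc' : IsMulCentral (1 - e) := (Subring.center R).sub_mem (Subring.center R).one_mem hc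
  have hcentral : ∀ i, IsMulCentral (![e, 1 - e] i) := Fin.forall_fin_two.mpr ⟨hc, hc'⟩
  refine ⟨_, _, inferInstance, inferInstance,
    (hcomplete.ringEquivOfIsMulCentral hcentral).trans (RingEquiv.piFinTwo _), ?_, ?_⟩
  · intro r
    refine Subtype.ext_iff.trans ?_
    change e * r * e = 0 ↔ _
    rw [mul_assoc, ← (hc.comm r).eq, ← mul_assoc, idem.eq]
  · intro r
    refine Subtype.ext_iff.trans ?_
    change (1 - e) * r * (1 - e) = 0 ↔ _
    rw [mul_assoc, ← (hc'.comm r).eq, ← mul_assoc, idem.one_sub.eq]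

theorem exists_ringEquiv_prod_of_natCast_mul_eq_zero {R : Type u} [Ring R] {a b : ℕ}
    (hab : a.Coprime b) (h : ((a * b : ℕ) : R) = 0) :
    ∃ (A B : Type u) (_ : Ring A) (_ : Ring B),
      Nonempty (R ≃+* A × B) ∧ (a : A) = 0 ∧ (b : B) = 0 := by
  obtain ⟨u, v, huv⟩ := Nat.isCoprime_iff_coprime.mpr hab
  have hmul : ∀ k : ℤ, ((k * (a * b) : ℤ) : R) = 0 := fun k => by
    rw [Int.cast_mul, ← Nat.cast_mul, Int.cast_natCast, h, mul_zero]
  set e : R := ((v * b : ℤ) : R)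
  have h1e : 1 - e = ((u * a : ℤ) : R) := by
    rw [sub_eq_iff_eq_add, ← Int.cast_add, huv, Int.cast_one]
  have hea : e * a = 0 := by
    rw [← Int.cast_natCast (R := R) a, ← Int.cast_mul,
      (by ring : v * b * a = v * (a * b)), hmul]
  have hb : (1 - e) * b = 0 := by
    rw [h1e, ← Int.cast_natCast (R := R) b, ← Int.cast_mul,
      (by ring : u * a * b = u * (a * b)), hmul]
  have idem : IsIdempotentElem e := by
    rw [IsIdempotentElem, ← Int.cast_mul,
      (by linear_combination (v * b) * huv : v * b * (v * b) = v * b - u * v * (a * b)),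
      Int.cast_sub, hmul, sub_zero]
  obtain ⟨A, B, _, _, φ, hA, hB⟩ :=
    idem.exists_ringEquiv_prod_of_isMulCentral (Set.intCast_mem_center R _)
  refine ⟨A, B, inferInstance, inferInstance, ⟨φ⟩, ?_, ?_⟩
  · simpa using (hA a).mpr hea
  · simpa using (hB b).mpr hb

theorem trinilClean_iff_prod (R : Type) [Ring R] :
    TrinilClean R ↔
      ∃ (A B : Type) (_ : Ring A) (_ : Ring B),
        Nonempty (R ≃+* A × B) ∧ TrinilClean A ∧ TrinilClean B ∧
        (2 : A) ∈ Ideal.jacobson (⊥ : Ideal A) ∧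
        (3 : B) ∈ Ideal.jacobson (⊥ : Ideal B) := by
  refine ⟨fun hR => ?_, fun ⟨A, B, _, _, ⟨φ⟩, hA, hB, _⟩ =>
    (hA.prod hB).of_surjective φ.symm.toRingHom φ.symm.surjective⟩
  obtain ⟨n, hn⟩ := hR.isNilpotent_six
  obtain ⟨A, B, _, _, ⟨φ⟩, h2, h3⟩ :=
    exists_ringEquiv_prod_of_natCast_mul_eq_zero (R := R) (a := 2 ^ n) (b := 3 ^ n)
      (Nat.Coprime.pow n n (by norm_num)) (by rw [← mul_pow]; exact_mod_cast hn)
  refine ⟨A, B, inferInstance, inferInstance, ⟨φ⟩,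
    hR.of_surjective ((RingHom.fst A B).comp φ) (Prod.fst_surjective.comp φ.surjective),
    hR.of_surjective ((RingHom.snd A B).comp φ) (Prod.snd_surjective.comp φ.surjective),
    Ideal.mem_jacobson_bot_of_isNilpotent_of_mem_center ⟨n, by exact_mod_cast h2⟩
      (Set.ofNat_mem_center A 2),
    Ideal.mem_jacobson_bot_of_isNilpotent_of_mem_center ⟨n, by exact_mod_cast h3⟩
      (Set.ofNat_mem_center B 3)⟩
end

section
/- If R is a trinil clean ring, then every element of the Jacobson radical J(R) is nilpotent. -/
theorem isIdempotentElem_sq_of_pow_three_eq {M : Type*} [Monoid M] {e : M} (he : e ^ 3 = e) :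
    IsIdempotentElem (e ^ 2) :=
  calc e ^ 2 * e ^ 2 = e ^ 3 * e := by rw [← pow_add, ← pow_succ]
    _ = e ^ 2 := by rw [he, sq]

namespace Ideal

variable {R : Type*} [Ring R]

theorem exists_mul_one_sub_eq_one_of_mem_jacobson_bot {a : R} (ha : a ∈ jacobson (⊥ : Ideal R)) :
    ∃ z, z * (1 - a) = 1 := by
  obtain ⟨z, hz⟩ := mem_jacobson_iff.mp ha (-1)
  rw [mem_bot] at hz
  exact ⟨z, sub_eq_zero.mp (by rw [← hz]; noncomm_ring)⟩

theorem _root_.IsIdempotentElem.eq_zero_of_mem_jacobson_bot {f : R} (hf : IsIdempotentElem f)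
    (hJ : f ∈ jacobson (⊥ : Ideal R)) : f = 0 := by
  obtain ⟨z, hz⟩ := exists_mul_one_sub_eq_one_of_mem_jacobson_bot hJ
  calc f = z * (1 - f) * f := by rw [hz, one_mul]
    _ = 0 := by rw [mul_assoc, sub_mul, one_mul, hf.eq, sub_self, mul_zero]

theorem _root_.IsIdempotentElem.mem_of_isNilpotent_mk {I : Ideal R} [I.IsTwoSided] {f : R}
    (hf : IsIdempotentElem f) (hnil : IsNilpotent (Quotient.mk I f)) : f ∈ I :=
  Quotient.eq_zero_iff_mem.mp ((hf.map (Quotient.mk I)).eq_zero_of_isNilpotent hnil)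

theorem eq_zero_of_pow_three_eq_of_add_mem_jacobson_bot {e w : R} (he : e ^ 3 = e)
    (hw : IsNilpotent w) (hJ : e + w ∈ jacobson (⊥ : Ideal R)) : e = 0 := by
  have hsq : IsIdempotentElem (e ^ 2) := isIdempotentElem_sq_of_pow_three_eq he
  have hmk : Quotient.mk (jacobson ⊥) e = -Quotient.mk (jacobson ⊥) w := by
    rw [eq_neg_iff_add_eq_zero, ← map_add, Quotient.eq_zero_iff_mem]
    exact hJ
  have hsqJ : e ^ 2 ∈ jacobson (⊥ : Ideal R) :=
    hsq.mem_of_isNilpotent_mk (by rw [map_pow, hmk]; exact (hw.map _).neg.pow_succ 1)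
  rw [← he, pow_succ', hsq.eq_zero_of_mem_jacobson_bot hsqJ, mul_zero]

end Ideal

theorem jacobson_nil_of_trinilClean (R : Type*) [Ring R] (h : TrinilClean R) :
    ∀ x ∈ Ideal.jacobson (⊥ : Ideal R), IsNilpotent x := by
  intro x hx
  obtain ⟨e, w, he, hw, rfl⟩ := h x
  rwa [Ideal.eq_zero_of_pow_three_eq_of_add_mem_jacobson_bot he hw hx, zero_add]
end

section
/- Let R be a ring and let a ∈ R. If a^2 - a is nilpotent, then there exists a monic polynomial f(t) with integer coefficients such that f(a)^2 = f(a) and a - f(a) is nilpotent (where f(a) denotes the evaluation of f at a in R). -/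
/-!
Write `m = n + 1` where `(a² - a)ⁿ = 0`, and choose `u, v ∈ ℤ[t]` with `u tᵐ + v (1 - t)ᵐ = 1`.
Then `e = u tᵐ` is idempotent modulo `(t² - t)ᵐ`, which vanishes at `a`, and is congruent to `t`
modulo `t² - t`, which is nilpotent at `a`. Adding a high multiple of the monic polynomial
`(t² - t)ᵐ` makes `e` monic without changing its value at `a`.
-/

open Polynomial

section IdempotentLifting

variable {S : Type*} [CommRing S] {x u v : S} {k : ℕ}

theorem dvd_sq_sub_self_of_add_eq_one (huv : u * x ^ k + v * (1 - x) ^ k = 1) :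
    (x ^ 2 - x) ^ k ∣ (u * x ^ k) ^ 2 - u * x ^ k := by
  refine ⟨-(u * v * (-1) ^ k), ?_⟩
  have hpow : (x ^ 2 - x) ^ k * (-1) ^ k = x ^ k * (1 - x) ^ k := by
    rw [← mul_pow, ← mul_pow]; ring
  linear_combination (u * x ^ k) * huv + u * v * hpow

theorem dvd_sub_mul_pow_of_add_eq_one (huv : u * x ^ (k + 1) + v * (1 - x) ^ (k + 1) = 1) :
    x ^ 2 - x ∣ x - u * x ^ (k + 1) :=
  ⟨u * x ^ k - v * (1 - x) ^ k, by linear_combination (-x) * huv⟩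

theorem exists_sq_sub_self_dvd_and_X_sub_dvd (R : Type*) [CommRing R] (k : ℕ) :
    ∃ e : R[X], ((X : R[X]) ^ 2 - X) ^ (k + 1) ∣ e ^ 2 - e ∧ (X : R[X]) ^ 2 - X ∣ X - e := by
  obtain ⟨u, v, huv⟩ : IsCoprime ((X : R[X]) ^ (k + 1)) ((1 - X) ^ (k + 1)) :=
    IsCoprime.pow ⟨1, 1, by ring⟩
  exact ⟨u * X ^ (k + 1), dvd_sq_sub_self_of_add_eq_one huv, dvd_sub_mul_pow_of_add_eq_one huv⟩

end IdempotentLifting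

namespace Polynomial

variable {R A : Type*} [CommSemiring R] [Semiring A] [Algebra R A] {a : A}

theorem aeval_eq_zero_of_dvd {p q : R[X]} (hpq : p ∣ q) (hp : aeval a p = 0) :
    aeval a q = 0 := by
  obtain ⟨r, rfl⟩ := hpq
  rw [map_mul, hp, zero_mul]

theorem isNilpotent_aeval_of_dvd {p q : R[X]} (hpq : p ∣ q) (hp : IsNilpotent (aeval a p)) :
    IsNilpotent (aeval a q) := by
  obtain ⟨r, rfl⟩ := hpq
  rw [map_mul]
  exact ((Commute.all p r).map (aeval a)).isNilpotent_mul_right hp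

theorem Monic.exists_monic_aeval_eq [Nontrivial R] {q : R[X]} (hq : q.Monic)
    (hqa : aeval a q = 0) (g : R[X]) : ∃ f : R[X], f.Monic ∧ aeval a f = aeval a g := by
  set d := g.natDegree + 1
  have hqX : (q * X ^ d).Monic := hq.mul (monic_X_pow d)
  have hdeg : g.degree < (q * X ^ d).degree := calc
    g.degree ≤ g.natDegree := degree_le_natDegree
    _ < d := by exact_mod_cast g.natDegree.lt_succ_self
    _ ≤ (q * X ^ d).degree := by
      rw [degree_eq_natDegree hqX.ne_zero, hq.natDegree_mul (monic_X_pow d), natDegree_X_pow]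
      exact_mod_cast Nat.le_add_left d _
  exact ⟨q * X ^ d + g, hqX.add_of_left hdeg, by simp [hqa]⟩

theorem monic_X_sq_sub_X (R : Type*) [CommRing R] [Nontrivial R] : ((X : R[X]) ^ 2 - X).Monic :=
  monic_X_pow_sub (by rw [degree_X]; norm_num)

end Polynomial

theorem exists_monic_poly_idempotent (R : Type*) [Ring R] (a : R)
    (h : IsNilpotent (a ^ 2 - a)) :
    ∃ f : Polynomial ℤ, f.Monic ∧
      (Polynomial.aeval a f) ^ 2 = Polynomial.aeval a f ∧
      IsNilpotent (a - Polynomial.aeval a f) := by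
  obtain ⟨n, hn⟩ := h
  have haeval : aeval a ((X : ℤ[X]) ^ 2 - X) = a ^ 2 - a := by simp
  have hnil : IsNilpotent (aeval a ((X : ℤ[X]) ^ 2 - X)) := haeval ▸ ⟨n, hn⟩
  have hvanish : aeval a (((X : ℤ[X]) ^ 2 - X) ^ (n + 1)) = 0 := by
    rw [map_pow, haeval, pow_succ, hn, zero_mul]
  obtain ⟨e, he_idem, he_near⟩ := exists_sq_sub_self_dvd_and_X_sub_dvd ℤ n
  obtain ⟨f, hf, hfe⟩ := ((monic_X_sq_sub_X ℤ).pow (n + 1)).exists_monic_aeval_eq hvanish e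
  refine ⟨f, hf, ?_, ?_⟩
  · rw [hfe, ← sub_eq_zero, ← map_pow, ← map_sub]
    exact aeval_eq_zero_of_dvd he_idem hvanish
  · simpa [hfe] using isNilpotent_aeval_of_dvd he_near hnil
end

section
/- A ring R is strongly 2-nil-clean if and only if for every a ∈ R the element a - a^3 is nilpotent. -/
/-!
If `a = e + w` with `e` tripotent, `w` nilpotent and `e w = w e`, then in the commutative ring
generated by `e` and `w` we have `a - a ^ 3 = w (1 - 3 e ^ 2 - 3 e w - w ^ 2)`, which is nilpotent.

Conversely, `a = 2` shows that `6` is nilpotent, and it suffices to find a tripotent `e` with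
`a - e` nilpotent inside the commutative subring `ℤ[a]`. By the Chinese remainder theorem a
commutative ring with `6 ^ k = 0` is the product of a ring in which `2` is nilpotent and one in
which `3` is nilpotent. In the second factor Newton's method lifts `a` to a root of `X ^ 3 - X`,
whose derivative `3 X ^ 2 - 1` is a unit there. In the first, `1` is a double root of
`X ^ 3 - X = X (X - 1) (X + 1)` modulo nilpotents, so `a` is lifted instead to a root of
`X ^ 2 - X`, an idempotent.
-/

/-- A ring is *strongly 2-nil-clean* if every element is the sum of a tripotent
(`e ^ 3 = e`) and a nilpotent that commute. -/
def Strongly2NilClean (R : Type*) [Ring R] : Prop :=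
  ∀ a : R, ∃ e w : R, e ^ 3 = e ∧ IsNilpotent w ∧ e * w = w * e ∧ a = e + w

open Polynomial

def LiftsTripotentsModNil (S : Type*) [Ring S] : Prop :=
  ∀ x : S, IsNilpotent (x - x ^ 3) → ∃ e : S, e ^ 3 = e ∧ IsNilpotent (x - e)

theorem Prod.isNilpotent_mk {S T : Type*} [MonoidWithZero S] [MonoidWithZero T] {x : S} {y : T}
    (hx : IsNilpotent x) (hy : IsNilpotent y) : IsNilpotent (x, y) := by
  obtain ⟨m, hm⟩ := hx
  obtain ⟨n, hn⟩ := hy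
  exact ⟨m + n, Prod.ext (pow_eq_zero_of_le (m.le_add_right n) hm)
    (pow_eq_zero_of_le (n.le_add_left m) hn)⟩

theorem Ideal.Quotient.isNilpotent_mk_span_pow {S : Type*} [CommRing S] (a : S) (k : ℕ) :
    IsNilpotent (Ideal.Quotient.mk (Ideal.span {a ^ k}) a) :=
  ⟨k, by rw [← map_pow, Ideal.Quotient.eq_zero_iff_mem]; exact Ideal.mem_span_singleton_self _⟩

theorem Subalgebra.isNilpotent_coe_iff {R A : Type*} [CommSemiring R] [Semiring A] [Algebra R A]
    {B : Subalgebra R A} {x : B} : IsNilpotent (x : A) ↔ IsNilpotent x :=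
  IsNilpotent.map_iff (f := B.val) Subtype.val_injective

namespace LiftsTripotentsModNil

variable {S T : Type*} [Ring S] [Ring T]

theorem prod (hS : LiftsTripotentsModNil S) (hT : LiftsTripotentsModNil T) :
    LiftsTripotentsModNil (S × T) := by
  rintro ⟨x, y⟩ hxy
  obtain ⟨e, he, hxe⟩ := hS x (hxy.map (RingHom.fst S T))
  obtain ⟨f, hf, hyf⟩ := hT y (hxy.map (RingHom.snd S T))
  exact ⟨(e, f), Prod.ext he hf, Prod.isNilpotent_mk hxe hyf⟩

theorem of_ringEquiv (hS : LiftsTripotentsModNil S) (φ : S ≃+* T) : LiftsTripotentsModNil T := by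
  intro x hx
  obtain ⟨e, he, hxe⟩ := hS (φ.symm x) (by simpa using hx.map φ.symm)
  exact ⟨φ e, by rw [← map_pow, he], by simpa using hxe.map φ⟩

end LiftsTripotentsModNil

section CommRing

variable {S : Type*} [CommRing S]

theorem isNilpotent_add_sub_pow_three {e w : S} (he : e ^ 3 = e) (hw : IsNilpotent w) :
    IsNilpotent (e + w - (e + w) ^ 3) := by
  have h : e + w - (e + w) ^ 3 = w * (1 - 3 * e ^ 2 - 3 * e * w - w ^ 2) := by
    linear_combination -he
  rw [h]
  exact (Commute.all _ _).isNilpotent_mul_right hw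

theorem isNilpotent_sq_sub_self_of_isNilpotent_two (h2 : IsNilpotent (2 : S)) {x : S}
    (hx : IsNilpotent (x - x ^ 3)) : IsNilpotent (x ^ 2 - x) := by
  have h : (x ^ 2 - x) ^ 2 = -x * (x - x ^ 3) + (x ^ 2 - x ^ 3) * 2 := by ring
  refine IsNilpotent.of_pow (m := 2) ?_
  rw [h]
  exact (Commute.all _ _).isNilpotent_add ((Commute.all _ _).isNilpotent_mul_left hx)
    ((Commute.all _ _).isNilpotent_mul_left h2)

theorem liftsTripotentsModNil_of_isNilpotent_two (h2 : IsNilpotent (2 : S)) :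
    LiftsTripotentsModNil S := by
  intro x hx
  obtain ⟨e, hxe, hroot⟩ :=
    (existsUnique_nilpotent_sub_and_aeval_eq_zero (x := x) (P := (X ^ 2 - X : S[X]))
      (by simpa using isNilpotent_sq_sub_self_of_isNilpotent_two h2 hx)
      (by simpa [one_add_one_eq_two] using
        ((Commute.all _ x).isNilpotent_mul_right h2).isUnit_sub_one)).exists
  have he : e ^ 2 = e := by simpa [sub_eq_zero] using hroot
  exact ⟨e, by rw [pow_succ, he, ← sq, he], hxe⟩

theorem liftsTripotentsModNil_of_isNilpotent_three (h3 : IsNilpotent (3 : S)) :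
    LiftsTripotentsModNil S := by
  intro x hx
  obtain ⟨e, hxe, he⟩ :=
    (existsUnique_nilpotent_sub_and_aeval_eq_zero (x := x) (P := (X ^ 3 - X : S[X]))
      (by simpa using hx.neg)
      (by simpa [two_add_one_eq_three] using
        ((Commute.all _ (x ^ 2)).isNilpotent_mul_right h3).isUnit_sub_one)).exists
  exact ⟨e, by simpa [sub_eq_zero] using he, hxe⟩

theorem liftsTripotentsModNil_of_isNilpotent_six (h6 : IsNilpotent (6 : S)) :
    LiftsTripotentsModNil S := by
  obtain ⟨k, hk⟩ := h6
  set I := Ideal.span {(2 : S) ^ k}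
  set J := Ideal.span {(3 : S) ^ k}
  have hIJ : IsCoprime I J := by
    rw [Ideal.isCoprime_span_singleton_iff]
    simpa using ((show IsCoprime (2 : ℤ) 3 from ⟨-1, 1, by norm_num⟩).pow (m := k) (n := k)).map
      (Int.castRingHom S)
  have hIJ_bot : I ⊓ J = ⊥ := by
    rw [← Ideal.mul_eq_inf_of_isCoprime hIJ, Ideal.span_singleton_mul_span_singleton, ← mul_pow,
      show (2 : S) * 3 = 6 by norm_num, hk, Ideal.span_singleton_eq_bot.mpr rfl]
  refine ((liftsTripotentsModNil_of_isNilpotent_two ?_).prod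
    (liftsTripotentsModNil_of_isNilpotent_three ?_)).of_ringEquiv
      ((Ideal.quotientInfEquivQuotientProd I J hIJ).symm.trans
        ((Ideal.quotEquivOfEq hIJ_bot).trans (RingEquiv.quotientBot S)))
  · rw [← map_ofNat (Ideal.Quotient.mk I) 2]
    exact Ideal.Quotient.isNilpotent_mk_span_pow 2 k
  · rw [← map_ofNat (Ideal.Quotient.mk J) 3]
    exact Ideal.Quotient.isNilpotent_mk_span_pow 3 k

end CommRing

section Ring

variable {R : Type*} [Ring R]

open scoped IsMulCommutative in
theorem Commute.isNilpotent_add_sub_pow_three {e w : R} (hew : Commute e w) (he : e ^ 3 = e)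
    (hw : IsNilpotent w) : IsNilpotent (e + w - (e + w) ^ 3) := by
  have : IsMulCommutative (Algebra.adjoin ℤ {e, w}) :=
    Algebra.isMulCommutative_adjoin ℤ (by
      simp only [Set.mem_insert_iff, Set.mem_singleton_iff]
      rintro x (rfl | rfl) y (rfl | rfl) <;> first | rfl | exact hew | exact hew.symm)
  let e' : Algebra.adjoin ℤ {e, w} := ⟨e, Algebra.subset_adjoin (by simp)⟩
  let w' : Algebra.adjoin ℤ {e, w} := ⟨w, Algebra.subset_adjoin (by simp)⟩
  exact Subalgebra.isNilpotent_coe_iff.2 <| _root_.isNilpotent_add_sub_pow_three (e := e')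
    (w := w') (Subtype.ext he) (Subalgebra.isNilpotent_coe_iff.1 hw)

theorem exists_tripotent_commute_isNilpotent_sub (h6 : IsNilpotent (6 : R)) {a : R}
    (ha : IsNilpotent (a - a ^ 3)) : ∃ e : R, e ^ 3 = e ∧ Commute e a ∧ IsNilpotent (a - e) := by
  let x : Algebra.adjoin ℤ {a} := ⟨a, Algebra.self_mem_adjoin_singleton ℤ a⟩
  obtain ⟨e, he, hxe⟩ := liftsTripotentsModNil_of_isNilpotent_six
    (Subalgebra.isNilpotent_coe_iff.1 (by exact_mod_cast h6)) x
    (Subalgebra.isNilpotent_coe_iff.1 ha)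
  exact ⟨e, congrArg Subtype.val he, congrArg Subtype.val (mul_comm e x),
    Subalgebra.isNilpotent_coe_iff.2 hxe⟩

end Ring

theorem strongly2NilClean_iff_nilpotent_sub_pow_three (R : Type*) [Ring R] :
    Strongly2NilClean R ↔ ∀ a : R, IsNilpotent (a - a ^ 3) := by
  refine ⟨fun h a => ?_, fun h a => ?_⟩
  · obtain ⟨e, w, he, hw, hew, rfl⟩ := h a
    exact Commute.isNilpotent_add_sub_pow_three hew he hw
  · have h6 : IsNilpotent (6 : R) := by
      simpa [show (2 : R) - 2 ^ 3 = -6 by norm_num] using h 2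
    obtain ⟨e, he, hea, hae⟩ := exists_tripotent_commute_isNilpotent_sub h6 (h a)
    exact ⟨e, a - e, he, hae, (hea.sub_right (Commute.refl e)).eq, by abel⟩
end

section
/- A ring R is strongly 2-nil-clean if and only if every element of R can be written as e + f + w where e and f are idempotents, w is nilpotent, and e, f, w commute pairwise. -/
/-!
Both conditions force `6` to be nilpotent: a tripotent `t` is a root of `X³ - X`, which takes
the value `6` at `2 = t + w`, and commuting idempotents `e, f` give a root `e + f` of
`X(X - 1)(X - 2)`, which takes the value `6` at `3 = e + f + w`. Inside the commutative subring
generated by the commuting data, idempotents then lift modulo nilpotents. A tripotent is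
`t = t² + z` with `z = t - t²`; since `z² = -2z`, also `z² - z = -3z` is nilpotent, so `z` is an
idempotent up to a nilpotent. Conversely `4² - 4 = 2·6`, so `4` lifts to an idempotent `p`, and
`e + f = ((e + f - 2ef) - p·ef) + (2 + p)·ef` is a difference of orthogonal idempotents, hence a
tripotent, plus `(2 + p)·ef ≡ 6ef`, a nilpotent.
-/

open Polynomial

theorem isNilpotent_algebraMap_eval_of_aeval_eq_zero {K A : Type*} [CommRing K] [Ring A]
    [Algebra K A] {p : K[X]} {x : A} {a : K} (hx : aeval x p = 0)
    (ha : IsNilpotent (x - algebraMap K A a)) : IsNilpotent (algebraMap K A (p.eval a)) := by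
  obtain ⟨q, hq⟩ := X_sub_C_dvd_sub_C_eval (a := a) (p := p)
  have key : -algebraMap K A (p.eval a) = (x - algebraMap K A a) * aeval x q := by
    simpa [hx] using congrArg (aeval x) hq
  have hc := (Commute.all (X - C a) q).map (aeval x)
  simp only [map_sub, aeval_X, aeval_C] at hc
  rw [← isNilpotent_neg_iff, key]
  exact hc.isNilpotent_mul_right ha

theorem Subring.isNilpotent_coe_iff {R : Type*} [Ring R] {S : Subring R} {x : S} :
    IsNilpotent (x : R) ↔ IsNilpotent x :=
  IsNilpotent.map_iff (f := S.subtype) Subtype.val_injective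

section CommRing

variable {S : Type*} [CommRing S]

theorem exists_isIdempotentElem_isNilpotent_sub_of_isNilpotent_sq_sub {x : S}
    (hx : IsNilpotent (x ^ 2 - x)) : ∃ e : S, IsIdempotentElem e ∧ IsNilpotent (x - e) := by
  let π := Ideal.Quotient.mk (nilradical S)
  have hker : ∀ y ∈ RingHom.ker π, IsNilpotent y := by
    simp [π, Ideal.mk_ker, mem_nilradical]
  have hπx : IsIdempotentElem (π x) := by
    rw [IsIdempotentElem, ← map_mul, ← sub_eq_zero, ← map_sub, ← sq,
      Ideal.Quotient.eq_zero_iff_mem]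
    exact mem_nilradical.mpr hx
  obtain ⟨e, he, hπe⟩ := exists_isIdempotentElem_eq_of_ker_isNilpotent π hker (π x) ⟨x, rfl⟩ hπx
  refine ⟨e, he, hker _ ?_⟩
  rw [RingHom.mem_ker, map_sub, hπe, sub_self]

theorem IsIdempotentElem.sub_pow_three_of_mul_eq_zero {u v : S} (hu : IsIdempotentElem u)
    (hv : IsIdempotentElem v) (huv : u * v = 0) : (u - v) ^ 3 = u - v := by
  linear_combination (u + 1) * hu.eq - (v + 1) * hv.eq + 3 * (v - u) * huv

theorem exists_idempotents_nilpotent_eq_add_of_tripotent (h6 : IsNilpotent (6 : S)) {t : S}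
    (ht : t ^ 3 = t) :
    ∃ e f n : S, IsIdempotentElem e ∧ IsIdempotentElem f ∧ IsNilpotent n ∧ t = e + f + n := by
  set z := t - t ^ 2
  have hz : z ^ 2 = -2 * z := by linear_combination (t - 2) * ht
  have h3z : IsNilpotent (3 * z) := by
    refine (IsNilpotent.pow_iff_pos two_ne_zero).mp ?_
    rw [show (3 * z) ^ 2 = -6 * (3 * z) by linear_combination 9 * hz]
    exact (Commute.all _ _).isNilpotent_mul_right h6.neg
  obtain ⟨f, hf, hzf⟩ := exists_isIdempotentElem_isNilpotent_sub_of_isNilpotent_sq_sub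
    (x := z) (by rw [show z ^ 2 - z = -(3 * z) by linear_combination hz]; exact h3z.neg)
  exact ⟨t ^ 2, f, z - f, by rw [IsIdempotentElem]; linear_combination t * ht, hf, hzf, by ring⟩

theorem exists_tripotent_nilpotent_add_eq_of_idempotents (h6 : IsNilpotent (6 : S)) {e f : S}
    (he : IsIdempotentElem e) (hf : IsIdempotentElem f) :
    ∃ t n : S, t ^ 3 = t ∧ IsNilpotent n ∧ e + f = t + n := by
  obtain ⟨p, hp, h4p⟩ :=
    exists_isIdempotentElem_isNilpotent_sub_of_isNilpotent_sq_sub (x := (4 : S)) (by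
      rw [show (4 : S) ^ 2 - 4 = 2 * 6 by norm_num]
      exact (Commute.all _ _).isNilpotent_mul_left h6)
  have hu : IsIdempotentElem (e + f - 2 * (e * f)) := by
    rw [IsIdempotentElem]
    linear_combination (4 * f ^ 2 - 4 * f + 1) * he.eq + hf.eq
  have huv : (e + f - 2 * (e * f)) * (p * (e * f)) = 0 := by
    linear_combination p * f * (1 - 2 * f) * he.eq - p * e * hf.eq
  refine ⟨e + f - 2 * (e * f) - p * (e * f), (2 + p) * (e * f),
    hu.sub_pow_three_of_mul_eq_zero (hp.mul (he.mul hf)) huv, ?_, by ring⟩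
  rw [show (2 + p) * (e * f) = (6 - (4 - p)) * (e * f) by ring]
  exact (Commute.all _ _).isNilpotent_mul_right ((Commute.all _ _).isNilpotent_sub h6 h4p)

end CommRing

section Ring

variable {R : Type*} [Ring R]

theorem isNilpotent_six_of_tripotent_add_nilpotent_eq_two {t w : R} (ht : t ^ 3 = t)
    (hw : IsNilpotent w) (h : t + w = 2) : IsNilpotent (6 : R) := by
  have := isNilpotent_algebraMap_eval_of_aeval_eq_zero (p := (X ^ 3 - X : ℤ[X])) (x := t)
    (a := 2) (by simp [ht]) (by simpa [← h] using hw)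
  norm_num at this
  exact this

theorem isNilpotent_six_of_idempotent_add_idempotent_add_nilpotent_eq_three {e f w : R}
    (he : IsIdempotentElem e) (hf : IsIdempotentElem f) (hw : IsNilpotent w) (hef : Commute e f)
    (h : e + f + w = 3) : IsNilpotent (6 : R) := by
  have hef2 : (e + f) * (e + f - 1) = 2 * (e * f) := by
    simp only [mul_sub, add_mul, mul_add, he.eq, hf.eq, hef.eq, mul_one, two_mul]
    abel
  have hroot : (e + f) * (e + f - 1) * (e + f - 2) = 0 := by
    have hefe : e * f * e = e * f := by rw [mul_assoc, ← hef.eq, ← mul_assoc, he.eq]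
    have heff : e * f * f = e * f := by rw [mul_assoc, hf.eq]
    rw [hef2, mul_assoc, mul_sub, mul_add, hefe, heff, mul_two, sub_self, mul_zero]
  have := isNilpotent_algebraMap_eval_of_aeval_eq_zero
    (p := (X * (X - 1) * (X - 2) : ℤ[X])) (x := e + f) (a := 3)
    (by simpa [map_ofNat] using hroot) (by simpa [← h] using hw)
  norm_num at this
  exact this

open scoped IsMulCommutative in
theorem exists_commuting_idempotents_nilpotent_eq_add_of_tripotent_add_nilpotent
    (h6 : IsNilpotent (6 : R)) {t w : R} (ht : t ^ 3 = t) (hw : IsNilpotent w)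
    (htw : Commute t w) :
    ∃ e f n : R, IsIdempotentElem e ∧ IsIdempotentElem f ∧ IsNilpotent n ∧
      e * f = f * e ∧ e * n = n * e ∧ f * n = n * f ∧ t + w = e + f + n := by
  let S := Subring.closure ({t, w} : Set R)
  have : IsMulCommutative S := Subring.isMulCommutative_closure (by simp [htw.eq])
  let t' : S := ⟨t, Subring.subset_closure (by simp)⟩
  let w' : S := ⟨w, Subring.subset_closure (by simp)⟩
  have h6' : IsNilpotent (6 : S) :=
    Subring.isNilpotent_coe_iff.mp (by rwa [← map_ofNat S.subtype 6] at h6)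
  obtain ⟨e, f, n, he, hf, hn, hsum⟩ :=
    exists_idempotents_nilpotent_eq_add_of_tripotent h6' (t := t') (Subtype.ext ht)
  have hnw : IsNilpotent (n + w') :=
    (Commute.all _ _).isNilpotent_add hn (Subring.isNilpotent_coe_iff.mp hw)
  refine ⟨e, f, ↑(n + w'), he.map S.subtype, hf.map S.subtype,
    Subring.isNilpotent_coe_iff.mpr hnw, setLike_mul_comm e.2 f.2,
    setLike_mul_comm e.2 (n + w').2, setLike_mul_comm f.2 (n + w').2, ?_⟩
  simpa [add_assoc] using congrArg Subtype.val (congrArg (· + w') hsum)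

open scoped IsMulCommutative in
theorem exists_tripotent_nilpotent_eq_add_of_commuting_idempotents_add_nilpotent
    (h6 : IsNilpotent (6 : R)) {e f w : R} (he : IsIdempotentElem e) (hf : IsIdempotentElem f)
    (hw : IsNilpotent w) (hef : Commute e f) (hew : Commute e w) (hfw : Commute f w) :
    ∃ t n : R, t ^ 3 = t ∧ IsNilpotent n ∧ t * n = n * t ∧ e + f + w = t + n := by
  let S := Subring.closure ({e, f, w} : Set R)
  have : IsMulCommutative S :=
    Subring.isMulCommutative_closure (by simp [hef.eq, hew.eq, hfw.eq])
  let e' : S := ⟨e, Subring.subset_closure (by simp)⟩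
  let f' : S := ⟨f, Subring.subset_closure (by simp)⟩
  let w' : S := ⟨w, Subring.subset_closure (by simp)⟩
  have h6' : IsNilpotent (6 : S) :=
    Subring.isNilpotent_coe_iff.mp (by rwa [← map_ofNat S.subtype 6] at h6)
  obtain ⟨t, n, ht, hn, hsum⟩ := exists_tripotent_nilpotent_add_eq_of_idempotents h6'
    (e := e') (f := f') (Subtype.ext he) (Subtype.ext hf)
  have hnw : IsNilpotent (n + w') :=
    (Commute.all _ _).isNilpotent_add hn (Subring.isNilpotent_coe_iff.mp hw)
  refine ⟨t, ↑(n + w'), congrArg Subtype.val ht, Subring.isNilpotent_coe_iff.mpr hnw,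
    setLike_mul_comm t.2 (n + w').2, ?_⟩
  simpa [add_assoc] using congrArg Subtype.val (congrArg (· + w') hsum)

end Ring

theorem strongly2NilClean_iff_two_idempotents_add_nilpotent (R : Type*) [Ring R] :
    Strongly2NilClean R ↔
      ∀ a : R, ∃ e f w : R, IsIdempotentElem e ∧ IsIdempotentElem f ∧
        IsNilpotent w ∧ e * f = f * e ∧ e * w = w * e ∧ f * w = w * f ∧
        a = e + f + w := by
  constructor
  · intro h
    obtain ⟨t, w, ht, hw, -, h2⟩ := h 2
    have h6 := isNilpotent_six_of_tripotent_add_nilpotent_eq_two ht hw h2.symm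
    intro a
    obtain ⟨t, w, ht, hw, htw, rfl⟩ := h a
    exact exists_commuting_idempotents_nilpotent_eq_add_of_tripotent_add_nilpotent h6 ht hw htw
  · intro h
    obtain ⟨e, f, w, he, hf, hw, hef, -, -, h3⟩ := h 3
    have h6 :=
      isNilpotent_six_of_idempotent_add_idempotent_add_nilpotent_eq_three he hf hw hef h3.symm
    intro a
    obtain ⟨e, f, w, he, hf, hw, hef, hew, hfw, rfl⟩ := h a
    exact exists_tripotent_nilpotent_eq_add_of_commuting_idempotents_add_nilpotent h6 he hf hw
      hef hew hfw
end

section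
/- A ring R is strongly 2-nil-clean if and only if the following three conditions hold: (1) R is trinil clean; (2) R is left quasi-duo, i.e., every maximal left ideal of R is a two-sided ideal; (3) every element of the Jacobson radical J(R) is nilpotent. -/
/-!
Both sides are equivalent to: `a ^ 3 - a` is nilpotent for every `a`.

For a commuting decomposition `a = e + w`, `a ^ 3 - a` is `w` times an element commuting with `w`.
Conversely `6 = 2 ^ 3 - 2` is nilpotent, so the commutative ring `ℤ[a]` splits along an idempotent
`α` with `3α` and `2(1 - α)` nilpotent; Newton's method lifts a root of `X ^ 3 - X` near `aα`
(a separable polynomial once `3` is nilpotent) and a root of `X ^ 2 - X` near `a(1 - α)`.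

If a maximal left ideal `I` were not two-sided, the simple module `R ⧸ I` would contain `u, w`
and `x ∈ R` with `x • u = w`, `x • w = u + w`; then `x ^ 3 - x` acts invertibly on `u, w`, which
a nilpotent cannot do. Elements `x` of the Jacobson radical are nilpotent because
`x = -(x ^ 3 - x) * (1 - x ^ 2)⁻¹`. Conversely, in a left quasi-duo ring every nilpotent lies in
every maximal left ideal, hence in `J(R)`, so `a = e + w` gives `a ^ 3 - a ≡ e ^ 3 - e = 0`
modulo `J(R)`.
-/

open Polynomial

section CommRing
variable {A : Type*} [CommRing A]

theorem exists_pow_three_eq_self_isNilpotent_sub_of_isNilpotent_three_mul {x : A}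
    (hx : IsNilpotent (x ^ 3 - x)) (h3 : IsNilpotent (3 * x)) :
    ∃ r : A, r ^ 3 = r ∧ IsNilpotent (x - r) := by
  have hP : IsNilpotent (aeval x (X ^ 3 - X : ℤ[X])) := by simpa using hx
  have hP' : IsUnit (aeval x (derivative (X ^ 3 - X : ℤ[X]))) := by
    simpa [map_ofNat, sq, ← mul_assoc] using
      ((Commute.all _ _).isNilpotent_mul_right h3).isUnit_sub_one
  obtain ⟨r, hxr, hr⟩ := (existsUnique_nilpotent_sub_and_aeval_eq_zero hP hP').exists
  exact ⟨r, by simpa [sub_eq_zero] using hr, hxr⟩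

theorem exists_isIdempotentElem_isNilpotent_sub_of_isNilpotent_two_mul {x : A}
    (hx : IsNilpotent (x ^ 3 - x)) (h2 : IsNilpotent (2 * x)) :
    ∃ r : A, IsIdempotentElem r ∧ IsNilpotent (x - r) := by
  have hP : IsNilpotent (aeval x (X ^ 2 - X : ℤ[X])) := by
    have hsq : (x ^ 2 - x) ^ 2 = x * (x ^ 3 - x) - 2 * x * (x ^ 2 - x) := by ring
    refine IsNilpotent.of_pow (m := 2) ?_
    simpa [hsq] using (Commute.all _ _).isNilpotent_sub
      ((Commute.all _ _).isNilpotent_mul_left hx) ((Commute.all _ _).isNilpotent_mul_right h2)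
  have hP' : IsUnit (aeval x (derivative (X ^ 2 - X : ℤ[X]))) := by
    simpa [map_ofNat] using h2.isUnit_sub_one
  obtain ⟨r, hxr, hr⟩ := (existsUnique_nilpotent_sub_and_aeval_eq_zero hP hP').exists
  exact ⟨r, by simpa [sub_eq_zero, IsIdempotentElem, sq] using hr, hxr⟩

theorem exists_isIdempotentElem_isNilpotent_mul_of_isCoprime {a b : A} (hab : IsCoprime a b)
    (h : IsNilpotent (a * b)) :
    ∃ e : A, IsIdempotentElem e ∧ IsNilpotent (a * e) ∧ IsNilpotent (b * (1 - e)) := by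
  obtain ⟨n, hn⟩ := h
  replace hn : a ^ (n + 1) * b ^ (n + 1) = 0 := by rw [← mul_pow, pow_succ, hn, zero_mul]
  obtain ⟨u, v, huv⟩ := hab.pow (m := n + 1) (n := n + 1)
  have he : IsIdempotentElem (v * b ^ (n + 1)) := by
    rw [IsIdempotentElem]
    linear_combination (-(u * v)) * hn + (v * b ^ (n + 1)) * huv
  refine ⟨v * b ^ (n + 1), he, ⟨n + 1, ?_⟩, ⟨n + 1, ?_⟩⟩
  · rw [mul_pow, he.pow_succ_eq]
    linear_combination v * hn
  · rw [mul_pow, he.one_sub.pow_succ_eq]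
    linear_combination u * hn - b ^ (n + 1) * huv

theorem exists_pow_three_eq_self_isNilpotent_sub {t : A} (h6 : IsNilpotent (6 : A))
    (ht : IsNilpotent (t ^ 3 - t)) : ∃ e : A, e ^ 3 = e ∧ IsNilpotent (t - e) := by
  obtain ⟨α, hα, h3α, h2β⟩ := exists_isIdempotentElem_isNilpotent_mul_of_isCoprime
    (a := (3 : A)) (b := 2) ⟨1, -1, by norm_num⟩ (by norm_num [h6])
  have hcorner {γ : A} (hγ : IsIdempotentElem γ) : IsNilpotent ((t * γ) ^ 3 - t * γ) := by
    rw [show (t * γ) ^ 3 - t * γ = γ * (t ^ 3 - t) by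
      linear_combination (t ^ 3 * (γ + 1)) * hγ.eq]
    exact (Commute.all _ _).isNilpotent_mul_left ht
  obtain ⟨r, hr, htr⟩ := exists_pow_three_eq_self_isNilpotent_sub_of_isNilpotent_three_mul
    (hcorner hα) (mul_left_comm 3 t α ▸ (Commute.all _ _).isNilpotent_mul_left h3α)
  obtain ⟨s, hs, hts⟩ := exists_isIdempotentElem_isNilpotent_sub_of_isNilpotent_two_mul
    (hcorner hα.one_sub) (mul_left_comm 2 t (1 - α) ▸ (Commute.all _ _).isNilpotent_mul_left h2β)
  refine ⟨α * r + (1 - α) * s, ?_, ?_⟩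
  · have hαβ : α * (1 - α) = 0 := by rw [mul_sub, mul_one, hα.eq, sub_self]
    calc (α * r + (1 - α) * s) ^ 3
        = α ^ 3 * r ^ 3 + (1 - α) ^ 3 * s ^ 3
          + 3 * (α * (1 - α)) * (α * r ^ 2 * s + (1 - α) * r * s ^ 2) := by ring
      _ = α * r + (1 - α) * s := by
        rw [hα.pow_succ_eq 2, hα.one_sub.pow_succ_eq 2, hαβ, hr, hs.pow_succ_eq 2]; ring
  · rw [show t - (α * r + (1 - α) * s) = α * (t * α - r) + (1 - α) * (t * (1 - α) - s) by
      linear_combination (-2 * t) * hα.eq]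
    exact (Commute.all _ _).isNilpotent_add ((Commute.all _ _).isNilpotent_mul_left htr)
      ((Commute.all _ _).isNilpotent_mul_left hts)

end CommRing

section Ring
variable {R : Type*} [Ring R]

open scoped IsMulCommutative in
theorem Commute.isNilpotent_pow_three_sub {e w : R} (hc : Commute e w) (he : e ^ 3 = e)
    (hw : IsNilpotent w) : IsNilpotent ((e + w) ^ 3 - (e + w)) := by
  let S := Subring.closure {e, w}
  have : IsMulCommutative S := Subring.isMulCommutative_closure (by
    rintro x (rfl | rfl) y (rfl | rfl) <;> first | rfl | exact hc | exact hc.symm)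
  let E : S := ⟨e, Subring.subset_closure (by simp)⟩
  let W : S := ⟨w, Subring.subset_closure (by simp)⟩
  have hE : E ^ 3 = E := Subtype.ext he
  have hW : IsNilpotent W := (IsNilpotent.map_iff S.subtype_injective).mp hw
  have : (E + W) ^ 3 - (E + W) = W * (3 * E ^ 2 + 3 * E * W + W ^ 2 - 1) := by
    linear_combination hE
  exact (this ▸ (Commute.all _ _).isNilpotent_mul_right hW).map S.subtype

open scoped IsMulCommutative in
theorem exists_pow_three_eq_self_commute_isNilpotent_sub {a : R} (h6 : IsNilpotent (6 : R))
    (ha : IsNilpotent (a ^ 3 - a)) : ∃ e : R, e ^ 3 = e ∧ Commute e a ∧ IsNilpotent (a - e) := by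
  let S := Subring.closure {a}
  have : IsMulCommutative S := Subring.isMulCommutative_closure (by
    rintro x rfl y rfl; rfl)
  let t : S := ⟨a, Subring.subset_closure rfl⟩
  obtain ⟨e, he, hte⟩ := exists_pow_three_eq_self_isNilpotent_sub
    ((IsNilpotent.map_iff S.subtype_injective).mp (by rwa [map_ofNat]))
    (t := t) ((IsNilpotent.map_iff S.subtype_injective).mp ha)
  exact ⟨e, congrArg Subtype.val he, congrArg Subtype.val (mul_comm e t), hte.map S.subtype⟩

theorem isUnit_one_add_of_mem_jacobson_bot {j : R} (hj : j ∈ (⊥ : Ideal R).jacobson) :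
    IsUnit (1 + j) := by
  have hleft : ∀ k ∈ (⊥ : Ideal R).jacobson, ∃ z, z * (1 + k) = 1 := fun k hk => by
    obtain ⟨z, hz⟩ := Ideal.exists_mul_add_sub_mem_of_mem_jacobson k hk
    exact ⟨z, by rwa [Ideal.mem_bot, sub_eq_zero, add_comm] at hz⟩
  obtain ⟨z, hz⟩ := hleft j hj
  obtain ⟨z', hz'⟩ := hleft (-(z * j)) (neg_mem (Ideal.mul_mem_left _ z hj))
  have hz_eq : 1 + -(z * j) = z := by rw [← hz]; noncomm_ring
  rw [hz_eq] at hz'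
  have hz'_eq : z' = 1 + j := by
    calc z' = z' * (z * (1 + j)) := by rw [hz, mul_one]
      _ = 1 + j := by rw [← mul_assoc, hz', one_mul]
  exact isUnit_iff_exists.mpr ⟨z, hz'_eq ▸ hz', hz⟩

theorem isNilpotent_of_mem_jacobson_bot (H : ∀ a : R, IsNilpotent (a ^ 3 - a)) {x : R}
    (hx : x ∈ (⊥ : Ideal R).jacobson) : IsNilpotent x := by
  obtain ⟨u, hu⟩ := isUnit_one_add_of_mem_jacobson_bot (Ideal.mul_mem_left _ (-x) hx)
  have hxu : Commute x ↑u⁻¹ := by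
    refine Commute.units_inv_right ?_
    rw [hu]
    exact (Commute.one_right x).add_right ((Commute.refl x).neg_right.mul_right (Commute.refl x))
  have hx_eq : x = -(x ^ 3 - x) * ↑u⁻¹ := by
    rw [Units.eq_mul_inv_iff_mul_eq, hu]
    noncomm_ring
  rw [hx_eq]
  exact ((hxu.pow_left 3).sub_left hxu).neg_left.isNilpotent_mul_right (H x).neg

variable {M : Type*} [AddCommGroup M] [Module R M]

theorem eq_zero_of_isNilpotent_of_smul_eq_self {n : R} (hn : IsNilpotent n) {u : M}
    (h : n • u = u) : u = 0 := by
  obtain ⟨k, hk⟩ := hn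
  have hpow : ∀ m : ℕ, n ^ m • u = u := by
    intro m
    induction m with
    | zero => rw [pow_zero, one_smul]
    | succ m ih => rw [pow_succ, mul_smul, h, ih]
  rw [← hpow k, hk, zero_smul]

theorem IsSimpleModule.exists_smul_eq_zero_and_smul_eq [IsSimpleModule R M] {a : R} {u w : M}
    (hau : a • u = 0) (haw : a • w ≠ 0) (v : M) : ∃ x : R, x • u = 0 ∧ x • w = v := by
  obtain ⟨y, hy⟩ := IsSimpleModule.toSpanSingleton_surjective R haw v
  refine ⟨y * a, by rw [mul_smul, hau, smul_zero], by rwa [mul_smul]⟩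

theorem IsSimpleModule.smul_eq_zero_of_smul_eq_zero [IsSimpleModule R M]
    (H : ∀ a : R, IsNilpotent (a ^ 3 - a)) {a : R} {u w : M} (hu : u ≠ 0) (hau : a • u = 0) :
    a • w = 0 := by
  by_contra haw
  obtain ⟨x₁, hx₁u, hx₁w⟩ := exists_smul_eq_zero_and_smul_eq hau haw (u + w)
  obtain ⟨c, hcu, hcw⟩ := exists_smul_eq_zero_and_smul_eq hau haw w
  obtain ⟨x₂, hx₂w, hx₂u⟩ := exists_smul_eq_zero_and_smul_eq (a := c - 1) (u := w) (w := u)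
    (by rw [sub_smul, hcw, one_smul, sub_self])
    (by rwa [sub_smul, hcu, one_smul, zero_sub, neg_ne_zero]) w
  set x := x₁ + x₂
  have hxu : x • u = w := by rw [add_smul, hx₁u, hx₂u, zero_add]
  have hxw : x • w = u + w := by rw [add_smul, hx₁w, hx₂w, add_zero]
  set N := x ^ 3 - x
  have hNu : N • u = u + w := by
    simp only [N, sub_smul, pow_succ, pow_zero, one_mul, mul_smul, hxu, hxw, smul_add]
    abel
  have hNw : N • w = u + w + w := by
    simp only [N, sub_smul, pow_succ, pow_zero, one_mul, mul_smul, hxu, hxw, smul_add]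
    abel
  -- on `u, w` the element `N` acts by the matrix `[[1, 1], [1, 2]]`, whose inverse is `3 - N`
  refine hu (eq_zero_of_isNilpotent_of_smul_eq_self
    (((Commute.ofNat_left 3 N).sub_left (Commute.refl N)).isNilpotent_mul_left (H x)) ?_)
  rw [mul_smul, hNu, sub_smul, smul_add N, hNu, hNw, ofNat_smul_eq_nsmul]
  abel

theorem Ideal.IsMaximal.isTwoSided_of_forall_isNilpotent_pow_three_sub
    (H : ∀ a : R, IsNilpotent (a ^ 3 - a)) {I : Ideal R} (hI : I.IsMaximal) : I.IsTwoSided := by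
  have : IsSimpleModule R (R ⧸ I) := isSimpleModule_iff_isCoatom.mpr (Ideal.isMaximal_def.mp hI)
  refine ⟨fun {a} r ha => ?_⟩
  have hu : (Submodule.Quotient.mk 1 : R ⧸ I) ≠ 0 := by
    rw [ne_eq, Submodule.Quotient.mk_eq_zero, ← Ideal.eq_top_iff_one]
    exact hI.ne_top
  have hau : a • (Submodule.Quotient.mk 1 : R ⧸ I) = 0 := by
    rwa [← Submodule.Quotient.mk_smul, smul_eq_mul, mul_one, Submodule.Quotient.mk_eq_zero]
  have := IsSimpleModule.smul_eq_zero_of_smul_eq_zero H hu hau (w := Submodule.Quotient.mk r)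
  rwa [← Submodule.Quotient.mk_smul, smul_eq_mul, Submodule.Quotient.mk_eq_zero] at this

theorem Ideal.IsMaximal.mem_of_isNilpotent {I : Ideal R} (hI : I.IsMaximal) [I.IsTwoSided]
    {w : R} (hw : IsNilpotent w) : w ∈ I := by
  by_contra hwI
  obtain ⟨y, i, hi, hyi⟩ := hI.exists_inv hwI
  have hdown : ∀ k : ℕ, w ^ (k + 1) ∈ I → w ^ k ∈ I := fun k hk => by
    rw [← one_mul (w ^ k), ← hyi, add_mul, mul_assoc, ← pow_succ']
    exact I.add_mem (I.mul_mem_left y hk) (I.mul_mem_right _ hi)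
  have hpow : ∀ k : ℕ, w ^ (k + 1) ∈ I → w ∈ I := fun k => by
    induction k with
    | zero => rw [zero_add, pow_one]; exact id
    | succ k ih => exact fun hk => ih (hdown _ hk)
  obtain ⟨n, hn⟩ := hw
  exact hwI (hpow n (by rw [pow_succ, hn, zero_mul]; exact I.zero_mem))

theorem isNilpotent_pow_three_sub_of_trinilClean (htri : TrinilClean R)
    (hmax : ∀ I : Ideal R, I.IsMaximal → I.IsTwoSided)
    (hJ : ∀ x ∈ (⊥ : Ideal R).jacobson, IsNilpotent x) (a : R) : IsNilpotent (a ^ 3 - a) := by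
  obtain ⟨e, w, he, hw, rfl⟩ := htri a
  have hwJ : w ∈ (⊥ : Ideal R).jacobson := Submodule.mem_sInf.mpr fun I ⟨_, hI⟩ =>
    have := hmax I hI
    hI.mem_of_isNilpotent hw
  refine hJ _ ((Ideal.Quotient.eq_zero_iff_mem).mp ?_)
  have hmk : Ideal.Quotient.mk _ (e + w) = Ideal.Quotient.mk (⊥ : Ideal R).jacobson e :=
    Ideal.Quotient.eq.mpr (by rwa [add_sub_cancel_left])
  rw [map_sub, map_pow, hmk, ← map_pow, ← map_sub, he, sub_self, map_zero]

theorem strongly2NilClean_iff_forall_isNilpotent_pow_three_sub :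
    Strongly2NilClean R ↔ ∀ a : R, IsNilpotent (a ^ 3 - a) := by
  refine ⟨fun h a => ?_, fun H a => ?_⟩
  · obtain ⟨e, w, he, hw, hc, rfl⟩ := h a
    exact Commute.isNilpotent_pow_three_sub hc he hw
  · have h6 : IsNilpotent (6 : R) := by
      have h2 := H 2
      norm_num at h2
      exact h2
    obtain ⟨e, he, hc, hn⟩ := exists_pow_three_eq_self_commute_isNilpotent_sub h6 (H a)
    exact ⟨e, a - e, he, hn, (hc.sub_right (Commute.refl e)).eq, by abel⟩

theorem Strongly2NilClean.trinilClean (h : Strongly2NilClean R) : TrinilClean R := fun a =>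
  let ⟨e, w, he, hw, _, ha⟩ := h a
  ⟨e, w, he, hw, ha⟩

end Ring

theorem strongly2NilClean_iff_trinilClean_quasiDuo_nilJacobson (R : Type*) [Ring R] :
    Strongly2NilClean R ↔
      (TrinilClean R ∧
        (∀ I : Ideal R, I.IsMaximal → ∀ a ∈ I, ∀ r : R, a * r ∈ I) ∧
        ∀ x ∈ Ideal.jacobson (⊥ : Ideal R), IsNilpotent x) := by
  have hqd : (∀ I : Ideal R, I.IsMaximal → I.IsTwoSided) ↔
      ∀ I : Ideal R, I.IsMaximal → ∀ a ∈ I, ∀ r : R, a * r ∈ I := by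
    simp only [Ideal.isTwoSided_iff]
    exact forall₂_congr fun _ _ => ⟨fun h a ha r => h r ha, fun h _ r ha => h _ ha r⟩
  rw [← hqd]
  constructor
  · intro h
    have H := strongly2NilClean_iff_forall_isNilpotent_pow_three_sub.mp h
    exact ⟨h.trinilClean, fun I hI => hI.isTwoSided_of_forall_isNilpotent_pow_three_sub H,
      fun x hx => isNilpotent_of_mem_jacobson_bot H hx⟩
  · rintro ⟨htri, hmax, hJ⟩
    exact strongly2NilClean_iff_forall_isNilpotent_pow_three_sub.mpr
      (isNilpotent_pow_three_sub_of_trinilClean htri hmax hJ)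
end

section
/- For every nontrivial ring R and every n ≥ 2, the matrix ring M_n(R) of n × n matrices over R is not strongly 2-nil-clean. -/
/-!
If `a = e + w` with `e ^ 3 = e`, `w` nilpotent and `e`, `w` commuting, then `a ^ 3 - a` is `w`
times an element commuting with `w`, hence nilpotent. In `M_n(R)` with `n ≥ 2`, the Fibonacci
matrix `a = [[0, 1], [1, 1]]` placed in a `2 × 2` corner satisfies `a ^ 3 - a = a ^ 2`, which is
invertible in the corner ring `e M_n(R) e` cut out by the nonzero idempotent `e = E₁₁ + E₂₂`;
so it cannot be nilpotent.
-/

section Ring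

variable {S : Type*} [Ring S]

theorem Commute.isNilpotent_add_pow_three_sub {e w : S} (hew : Commute e w) (he : e ^ 3 = e)
    (hw : IsNilpotent w) : IsNilpotent ((e + w) ^ 3 - (e + w)) := by
  have hexpand : (e + w) ^ 3 - (e + w) = w * (3 * e ^ 2 + 3 * (e * w) + w ^ 2 - 1) := by
    linear_combination (norm := noncomm_ring)
      he + e * hew.eq + 2 * (hew.eq * e) + hew.eq * w - w * hew.eq
  rw [hexpand]
  refine Commute.isNilpotent_mul_right ?_ hw
  have hwe := hew.symm
  refine (((?_ : Commute w _).add_right ?_).add_right ?_).sub_right (Commute.one_right w)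
  · exact (Commute.ofNat_right w 3).mul_right (hwe.pow_right 2)
  · exact (Commute.ofNat_right w 3).mul_right (hwe.mul_right (Commute.refl w))
  · exact (Commute.refl w).pow_right 2

theorem Strongly2NilClean.isNilpotent_pow_three_sub (h : Strongly2NilClean S) (a : S) :
    IsNilpotent (a ^ 3 - a) := by
  obtain ⟨e, w, he, hw, hew, rfl⟩ := h a
  exact Commute.isNilpotent_add_pow_three_sub hew he hw

theorem not_isNilpotent_of_mul_eq_of_mul_eq {x y e : S} (hxy : x * y = e) (hyx : y * x = e)
    (he : IsIdempotentElem e) (he0 : e ≠ 0) : ¬ IsNilpotent x := fun hx =>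
  he0 <| he.eq_zero_of_isNilpotent <|
    hxy ▸ Commute.isNilpotent_mul_right (hxy.trans hyx.symm) hx

end Ring

theorem Matrix.exists_not_isNilpotent_pow_three_sub {R ι : Type*} [Ring R] [Nontrivial R]
    [Fintype ι] [DecidableEq ι] {i j : ι} (hij : i ≠ j) :
    ∃ a : Matrix ι ι R, ¬ IsNilpotent (a ^ 3 - a) := by
  set a : Matrix ι ι R := single i j 1 + single j i 1 + single j j 1
  set x : Matrix ι ι R := single i i 1 + single i j 1 + single j i 1 + single j j 1 + single j j 1
  set y : Matrix ι ι R := single i i 1 + single i i 1 - single i j 1 - single j i 1 + single j j 1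
  set e : Matrix ι ι R := single i i 1 + single j j 1
  have hcube : a ^ 3 - a = x := by
    simp [a, x, pow_succ, add_mul, mul_add, hij, hij.symm]
    abel
  have hxy : x * y = e := by
    simp [x, y, e, add_mul, mul_add, mul_sub, hij, hij.symm]
    abel
  have hyx : y * x = e := by
    simp [x, y, e, add_mul, mul_add, sub_mul, hij, hij.symm]
    abel
  have he : IsIdempotentElem e := by
    simp [IsIdempotentElem, e, add_mul, mul_add, hij, hij.symm]
  have he0 : e ≠ 0 := fun h => by simpa [e, single_apply, hij.symm] using congr_fun (congr_fun h i) i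
  exact ⟨a, hcube ▸ not_isNilpotent_of_mul_eq_of_mul_eq hxy hyx he he0⟩

theorem matrix_not_strongly2NilClean (R : Type*) [Ring R] [Nontrivial R]
    (n : ℕ) (hn : 2 ≤ n) :
    ¬ Strongly2NilClean (Matrix (Fin n) (Fin n) R) := by
  intro h
  have h01 : (⟨0, by omega⟩ : Fin n) ≠ ⟨1, by omega⟩ := by simp
  obtain ⟨a, ha⟩ := Matrix.exists_not_isNilpotent_pow_three_sub (R := R) h01
  exact ha (h.isNilpotent_pow_three_sub a)
end

section
/- Let K be a field and n ≥ 1. Then the matrix ring M_n(K) is trinil clean if and only if K is isomorphic (as a ring) to ℤ/2ℤ or to ℤ/3ℤ. -/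
open Module

def IsTrinilClean {R : Type*} [Ring R] (a : R) : Prop :=
  ∃ e w : R, e ^ 3 = e ∧ IsNilpotent w ∧ a = e + w

namespace IsTrinilClean

variable {R : Type*} [Ring R] {a : R}

theorem map {S F : Type*} [Ring S] [FunLike F R S] [RingHomClass F R S] (ha : IsTrinilClean a)
    (φ : F) : IsTrinilClean (φ a) := by
  obtain ⟨e, w, he, hw, rfl⟩ := ha
  exact ⟨φ e, φ w, by rw [← map_pow, he], hw.map φ, map_add φ e w⟩

theorem isNilpotent_pow_three_sub (ha : IsTrinilClean a) (hcomm : ∀ x, Commute a x) :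
    IsNilpotent (a ^ 3 - a) := by
  obtain ⟨e, w, he, hw, rfl⟩ := ha
  have hae : Commute (e + w) e := hcomm e
  have hwe : Commute w e := by simpa using hae.sub_left (Commute.refl e)
  have hcube := hae.geom_sum₂_mul 3
  rw [add_sub_cancel_left] at hcube
  have hfactor : (e + w) ^ 3 - (e + w) =
      (∑ i ∈ Finset.range 3, (e + w) ^ i * e ^ (3 - 1 - i) - 1) * w := by
    rw [sub_one_mul, hcube, he]
    abel
  rw [hfactor]
  refine Commute.isNilpotent_mul_left ?_ hw
  refine (Commute.sum_left _ _ _ fun i _ => ?_).sub_left (Commute.one_left w)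
  exact ((hcomm w).pow_left i).mul_left (hwe.symm.pow_left _)

end IsTrinilClean

theorem pow_three_eq_self_of_trinilClean {K A : Type*} [Field K] [Ring A] [Algebra K A]
    [Nontrivial A] (h : TrinilClean A) (x : K) : x ^ 3 = x := by
  have hx : IsTrinilClean (algebraMap K A x) := h _
  have hnil := hx.isNilpotent_pow_three_sub (Algebra.commute_algebraMap_left x)
  rw [← map_pow, ← map_sub, IsNilpotent.map_iff (algebraMap K A).injective] at hnil
  exact sub_eq_zero.mp hnil.eq_zero

theorem forall_pow_three_eq_self_iff (K : Type*) [Field K] :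
    (∀ x : K, x ^ 3 = x) ↔ Nonempty (K ≃+* ZMod 2) ∨ Nonempty (K ≃+* ZMod 3) := by
  constructor
  · intro h
    classical
    have hmem : ∀ x : K, x ∈ ({0, 1, -1} : Finset K) := fun x => by
      have : x * (x - 1) * (x + 1) = 0 := by linear_combination h x
      simp only [mul_eq_zero, sub_eq_zero, add_eq_zero_iff_eq_neg] at this
      simpa [or_assoc] using this
    let _ : Fintype K := ⟨_, hmem⟩
    have hcard : Fintype.card K ≤ 3 := Finset.card_le_three
    have := Fintype.one_lt_card (α := K)
    interval_cases hK : Fintype.card K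
    · exact .inl ⟨(ZMod.ringEquivOfPrime K Nat.prime_two hK).symm⟩
    · exact .inr ⟨(ZMod.ringEquivOfPrime K Nat.prime_three hK).symm⟩
  · have h₂ : ∀ y : ZMod 2, y ^ 3 = y := by decide
    have h₃ : ∀ y : ZMod 3, y ^ 3 = y := by decide
    rintro (h | h) x <;> obtain ⟨φ⟩ := h <;> apply φ.injective <;> rw [map_pow]
    exacts [h₂ (φ x), h₃ (φ x)]

namespace Matrix

theorem isNilpotent_of_forall_le_imp_eq_zero {n R : Type*} [Fintype n] [LinearOrder n]
    [CommRing R] {M : Matrix n n R} (hM : ∀ i j, i ≤ j → M i j = 0) : IsNilpotent M := by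
  have hupper : Mᵀ.IsUpperTriangular := fun i j hij => hM j i hij.le
  have hchar : M.charpoly = Polynomial.X ^ Fintype.card n := by
    rw [← charpoly_transpose, charpoly_of_isUpperTriangular _ hupper]
    simp [hM _ _ le_rfl]
  refine ⟨Fintype.card n, ?_⟩
  simpa [hchar] using M.aeval_self_charpoly

/- The tripotent, with `P` the matrix unit at `(last, last)` and `c = M last last`: if `c ≠ 0`
then `c ^ 2 = 1` and the last column `M * P` is tripotent; if `c = 0` but `M k last ≠ 0`, take the
rank-two `M * P + Q`, `Q` the matrix unit at `(last, k)` scaled by `(M k last)⁻¹`; if the last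
column vanishes, take `0`. In each case the remainder is strictly lower triangular. -/
theorem isTrinilClean_of_companion {K : Type*} [Field K] {m : ℕ}
    {M : Matrix (Fin (m + 1)) (Fin (m + 1)) K}
    (hM : ∀ i (j : Fin m), M i j.castSucc = if j.succ = i then 1 else 0)
    (hlast : M (Fin.last m) (Fin.last m) ^ 3 = M (Fin.last m) (Fin.last m)) :
    IsTrinilClean M := by
  set c := M (Fin.last m) (Fin.last m)
  set P : Matrix (Fin (m + 1)) (Fin (m + 1)) K := single (Fin.last m) (Fin.last m) 1
  have hPMP : P * M * P = c • P := by
    simp only [P, single_mul_mul_single, one_mul, mul_one, smul_single, smul_eq_mul, c]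
  have hPMP' : ∀ X, X * P * M * P = c • (X * P) := fun X => by
    rw [Matrix.mul_assoc X, Matrix.mul_assoc X, hPMP, Matrix.mul_smul]
  have hM_le : ∀ i j, i ≤ j → j ≠ Fin.last m → M i j = 0 := by
    intro i j hij hj
    obtain ⟨j, rfl⟩ := Fin.exists_castSucc_eq.mpr hj
    rw [hM, if_neg]
    rintro rfl
    exact Fin.castSucc_lt_succ.not_ge hij
  by_cases hc : c = 0
  · by_cases hcol : ∀ i, M i (Fin.last m) = 0
    · refine ⟨0, M, by simp, isNilpotent_of_forall_le_imp_eq_zero fun i j hij => ?_, by simp⟩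
      by_cases hj : j = Fin.last m
      · exact hj ▸ hcol i
      · exact hM_le i j hij hj
    push Not at hcol
    obtain ⟨k, hk⟩ := hcol
    have hkl : k ≠ Fin.last m := by
      rintro rfl
      exact hk hc
    set Q : Matrix (Fin (m + 1)) (Fin (m + 1)) K := single (Fin.last m) k (M k (Fin.last m))⁻¹
    have hQMP : Q * M * P = P := by
      simp only [P, Q, single_mul_mul_single, inv_mul_cancel₀ hk, one_mul]
    have hQMP' : ∀ X, X * Q * M * P = X * P := fun X => by
      rw [Matrix.mul_assoc X, Matrix.mul_assoc X, hQMP]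
    have hQQ : Q * Q = 0 := single_mul_single_of_ne _ _ _ _ hkl _
    have hQQ' : ∀ X, X * Q * Q = 0 := fun X => by rw [Matrix.mul_assoc, hQQ, Matrix.mul_zero]
    have hPQ : P * Q = Q := by simp [P, Q]
    have hPQ' : ∀ X, X * P * Q = X * Q := fun X => by rw [Matrix.mul_assoc, hPQ]
    refine ⟨M * P + Q, M - (M * P + Q), ?_, ?_, by abel⟩
    · simp only [pow_succ, pow_zero, Matrix.one_mul, Matrix.add_mul, Matrix.mul_add,
        ← Matrix.mul_assoc, hPMP, hPMP', hc, zero_smul, hQMP, hQMP', hQQ, hQQ', hPQ, hPQ',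
        add_zero, zero_add]
    · refine isNilpotent_of_forall_le_imp_eq_zero fun i j hij => ?_
      by_cases hj : j = Fin.last m
      · subst hj
        simp [P, Q, hkl]
      · have hi : i ≠ Fin.last m := by
          rintro rfl
          exact hj (Fin.last_le_iff.mp hij)
        simp [P, Q, hj, hi.symm, hM_le i j hij hj]
  · have hc2 : c * c = 1 := by
      have : c * (c * c - 1) = 0 := by linear_combination hlast
      exact sub_eq_zero.mp ((mul_eq_zero.mp this).resolve_left hc)
    refine ⟨M * P, M - M * P, ?_, ?_, by abel⟩
    · simp only [pow_succ, pow_zero, Matrix.one_mul, ← Matrix.mul_assoc, hPMP', Matrix.smul_mul,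
        smul_smul, hc2, one_smul]
    · refine isNilpotent_of_forall_le_imp_eq_zero fun i j hij => ?_
      by_cases hj : j = Fin.last m
      · subst hj
        simp [P]
      · simp [P, hj, hM_le i j hij hj]

end Matrix

theorem Submodule.exists_lift_pow_three_eq_self {K V : Type*} [DivisionRing K] [AddCommGroup V]
    [Module K V] (p : Submodule K V) {e₁ : Module.End K p} {e₂ : Module.End K (V ⧸ p)}
    (he₁ : e₁ ^ 3 = e₁) (he₂ : e₂ ^ 3 = e₂) :
    ∃ (e : Module.End K V) (he : p ≤ p.comap e),
      e ^ 3 = e ∧ e.restrict he = e₁ ∧ p.mapQ p e he = e₂ := by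
  obtain ⟨c, hc⟩ := p.exists_isCompl
  set Q := p.quotientEquivOfIsCompl c hc
  set e := LinearMap.ofIsCompl hc (p.subtype ∘ₗ e₁)
    (c.subtype ∘ₗ (Q : (V ⧸ p) →ₗ[K] c) ∘ₗ e₂ ∘ₗ (Q.symm : c →ₗ[K] V ⧸ p))
  have he_p : ∀ u : p, e u = e₁ u := fun u => LinearMap.ofIsCompl_apply_left hc u
  have he_c : ∀ u : c, e u = Q (e₂ (Q.symm u)) := fun u => by simp [e]
  have he : p ≤ p.comap e := fun x hx => by simp [he_p ⟨x, hx⟩]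
  refine ⟨e, he, (LinearMap.ofIsCompl_eq hc (fun u => ?_) (fun u => ?_)).symm, ?_, ?_⟩
  · have := congr_arg Subtype.val (LinearMap.congr_fun he₁ u)
    simp only [pow_succ, pow_zero, one_mul, Module.End.mul_apply] at this ⊢
    simp [he_p, this]
  · have := LinearMap.congr_fun he₂ (Q.symm u)
    simp only [pow_succ, pow_zero, one_mul, Module.End.mul_apply] at this ⊢
    simp [he_c, this]
  · ext u
    simp [he_p]
  · refine Submodule.linearMap_qext p (LinearMap.ext fun x => ?_)
    obtain ⟨a, b, rfl, -⟩ := Submodule.existsUnique_add_of_isCompl hc x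
    have hb : (Submodule.Quotient.mk (b : V) : V ⧸ p) = Q.symm b := rfl
    have hmk : ∀ u : p, (Submodule.Quotient.mk (u : V) : V ⧸ p) = 0 := fun u =>
      (Submodule.Quotient.mk_eq_zero p).mpr u.2
    rw [LinearMap.comp_apply, LinearMap.comp_apply, Submodule.mkQ_apply, Submodule.mapQ_apply,
      map_add e, he_p, he_c, Submodule.Quotient.mk_add, Submodule.Quotient.mk_add, hmk, hmk,
      zero_add, zero_add, Submodule.mk_quotientEquivOfIsCompl_apply, hb]

namespace Module.End

variable {K V : Type*} [AddCommGroup V]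

theorem isNilpotent_of_restrict_of_mapQ [Ring K] [Module K V] {f : Module.End K V}
    {p : Submodule K V} (hp : p ≤ p.comap f) (h₁ : IsNilpotent (f.restrict hp))
    (h₂ : IsNilpotent (p.mapQ p f hp)) : IsNilpotent f := by
  obtain ⟨k₁, hk₁⟩ := h₁
  obtain ⟨k₂, hk₂⟩ := h₂
  refine ⟨k₁ + k₂, LinearMap.ext fun x => ?_⟩
  have hx : (f ^ k₂) x ∈ p := by
    rw [← Submodule.Quotient.mk_eq_zero, ← Submodule.mapQ_apply p p (f ^ k₂)
      (h := p.le_comap_pow_of_le_comap hp k₂), Submodule.mapQ_pow p hp, hk₂,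
      LinearMap.zero_apply]
  have := congr_arg Subtype.val (LinearMap.congr_fun hk₁ ⟨_, hx⟩)
  rw [pow_restrict] at this
  simpa [pow_add] using this

theorem isTrinilClean_of_restrict_of_mapQ [DivisionRing K] [Module K V] {f : Module.End K V}
    {p : Submodule K V} (hp : p ≤ p.comap f) (h₁ : IsTrinilClean (f.restrict hp))
    (h₂ : IsTrinilClean (p.mapQ p f hp)) : IsTrinilClean f := by
  obtain ⟨e₁, w₁, he₁, hw₁, hf₁⟩ := h₁
  obtain ⟨e₂, w₂, he₂, hw₂, hf₂⟩ := h₂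
  obtain ⟨e, he, he3, hre, hqe⟩ := p.exists_lift_pow_three_eq_self he₁ he₂
  have hw : p ≤ p.comap (f - e) := fun x hx => p.sub_mem (hp hx) (he hx)
  refine ⟨e, f - e, he3, isNilpotent_of_restrict_of_mapQ hw ?_ ?_, (add_sub_cancel e f).symm⟩
  · rw [← LinearMap.restrict_sub hp he, hre, hf₁, add_sub_cancel_left]
    exact hw₁
  · have hmapQ : p.mapQ p (f - e) hw = p.mapQ p f hp - p.mapQ p e he := by
      ext x
      simp
    rw [hmapQ, hqe, hf₂, add_sub_cancel_left]
    exact hw₂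

theorem exists_cyclic_invariant_basis [DivisionRing K] [Module K V] [FiniteDimensional K V]
    [Nontrivial V] (f : Module.End K V) :
    ∃ (m : ℕ) (W : Submodule K V) (hW : W ≤ W.comap f) (b : Basis (Fin (m + 1)) K W),
      ∀ j : Fin m, f.restrict hW (b j.castSucc) = b j.succ := by
  classical
  obtain ⟨v, hv⟩ := exists_ne (0 : V)
  set g : ℕ → V := fun i => (f ^ i) v
  have hex : ∃ k, ¬LinearIndependent K fun i : Fin (k + 1) => g i :=
    ⟨finrank K V, fun h => by simpa using h.fintype_card_le_finrank⟩
  obtain ⟨m, hm⟩ : ∃ m, Nat.find hex = m + 1 := by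
    refine Nat.exists_eq_succ_of_ne_zero fun h0 => Nat.find_spec hex ?_
    rw [h0]
    exact LinearIndependent.of_subsingleton (ι := Fin 1) 0 (by simpa [g] using hv)
  have hli : LinearIndependent K fun i : Fin (m + 1) => g i :=
    not_not.mp (Nat.find_min hex (by omega))
  have hdep : g (m + 1) ∈ Submodule.span K (Set.range fun i : Fin (m + 1) => g i) := by
    have h := Nat.find_spec hex
    rw [hm] at h
    have hsnoc : (fun i : Fin (m + 2) => g i) =
        Fin.snoc (fun i : Fin (m + 1) => g i) (g (m + 1)) := by
      ext i
      induction i using Fin.lastCases <;> simp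
    rw [hsnoc, linearIndependent_finSnoc] at h
    by_contra h'
    exact h ⟨hli, h'⟩
  set W := Submodule.span K (Set.range fun i : Fin (m + 1) => g i)
  have hW : W ≤ W.comap f := by
    rw [← Submodule.map_le_iff_le_comap, Submodule.map_span_le]
    rintro _ ⟨i, rfl⟩
    have hfg : f (g i) = g (i + 1) := by simp [g, pow_succ']
    rw [hfg]
    rcases Fin.eq_castSucc_or_eq_last i with ⟨j, rfl⟩ | rfl
    · exact Submodule.subset_span ⟨j.succ, by simp⟩
    · simpa using hdep
  refine ⟨m, W, hW, Basis.span hli, fun j => Subtype.ext ?_⟩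
  rw [LinearMap.coe_restrict_apply, Basis.span_apply, Basis.span_apply]
  simp [g, pow_succ']

theorem exists_isTrinilClean_restrict [Field K] [Module K V] (hK : ∀ x : K, x ^ 3 = x)
    [FiniteDimensional K V] [Nontrivial V] (f : Module.End K V) :
    ∃ (W : Submodule K V) (hW : W ≤ W.comap f),
      0 < finrank K W ∧ IsTrinilClean (f.restrict hW) := by
  obtain ⟨m, W, hW, b, hb⟩ := f.exists_cyclic_invariant_basis
  refine ⟨W, hW, by simp [finrank_eq_card_basis b], ?_⟩
  have hM : IsTrinilClean (LinearMap.toMatrixAlgEquiv b (f.restrict hW)) :=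
    Matrix.isTrinilClean_of_companion (fun i j => by
      rw [LinearMap.toMatrixAlgEquiv_apply, hb, Basis.repr_self, Finsupp.single_apply]) (hK _)
  simpa using hM.map (LinearMap.toMatrixAlgEquiv b).symm

theorem isTrinilClean_of_forall_pow_three_eq_self [Field K] [Module K V]
    (hK : ∀ x : K, x ^ 3 = x) [FiniteDimensional K V] (f : Module.End K V) :
    IsTrinilClean f := by
  induction hd : finrank K V using Nat.strong_induction_on generalizing V with
  | _ d ih =>
  rcases subsingleton_or_nontrivial V with hV | hV
  · exact ⟨0, f, by simp, ⟨1, Subsingleton.elim _ _⟩, by simp⟩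
  obtain ⟨W, hW, hW_pos, hfW⟩ := f.exists_isTrinilClean_restrict hK
  refine isTrinilClean_of_restrict_of_mapQ hW hfW (ih _ ?_ _ rfl)
  have := W.finrank_quotient_add_finrank
  omega

end Module.End

theorem Matrix.isTrinilClean_of_forall_pow_three_eq_self {K n : Type*} [Field K] [Fintype n]
    [DecidableEq n] (hK : ∀ x : K, x ^ 3 = x) (A : Matrix n n K) : IsTrinilClean A := by
  rw [← AlgEquiv.apply_symm_apply LinearMap.toMatrixAlgEquiv' A]
  exact (Module.End.isTrinilClean_of_forall_pow_three_eq_self hK _).map _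

theorem matrix_trinilClean_iff_field (K : Type*) [Field K] (n : ℕ) (hn : 1 ≤ n) :
    TrinilClean (Matrix (Fin n) (Fin n) K) ↔
      Nonempty (K ≃+* ZMod 2) ∨ Nonempty (K ≃+* ZMod 3) := by
  have : Nonempty (Fin n) := ⟨⟨0, hn⟩⟩
  rw [← forall_pow_three_eq_self_iff]
  exact ⟨pow_three_eq_self_of_trinilClean, Matrix.isTrinilClean_of_forall_pow_three_eq_self⟩
end
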